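/- Let L be an ω-Lie algebra over a field K of characteristic ≠ 2 and let R : L → L be a Rota-Baxter operator of weight 0 on L whose image is contained in ker(ω) := {x ∈ L : ω(x,y) = 0 for all y ∈ L}. Then the bilinear product x∘y := [R(x),y] makes the underlying vector space of L into a left-symmetric algebra, i.e. (x∘y)∘z − x∘(y∘z) = (y∘x)∘z − y∘(x∘z) for all x,y,z ∈ L. -/
import Mathlib


/-- If `R` is a Rota-Baxter operator of weight 0 on an ω-Lie algebra `L`
whose image is contained in `ker ω`, then `x ∘ y := [R x, y]` is a left-symmetric
product on `L`. -/
theorem rotaBaxter_gives_leftSymmetric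
    {K : Type*} [Field K] (h2 : (2 : K) ≠ 0)
    {L : Type*} [AddCommGroup L] [Module K L]
    (b : L →ₗ[K] L →ₗ[K] L) (ω : L →ₗ[K] L →ₗ[K] K)
    (hskew : ∀ x y : L, b x y = - b y x)
    (hωskew : ∀ x y : L, ω x y = - ω y x)
    (hjac : ∀ x y z : L, b (b x y) z + b (b y z) x + b (b z x) y
      = ω x y • z + ω y z • x + ω z x • y)
    (R : L →ₗ[K] L)
    (hRB : ∀ x y : L, b (R x) (R y) = R (b (R x) y + b x (R y)))
    (hker : ∀ x y : L, ω (R x) y = 0) :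
    ∀ x y z : L,
      b (R (b (R x) y)) z - b (R x) (b (R y) z)
        = b (R (b (R y) x)) z - b (R y) (b (R x) z) := by
  intro x y z
  -- R (b (R x) y) = b (R x) (R y) + R (b (R y) x)
  have hR : R (b (R x) y) = b (R x) (R y) + R (b (R y) x) := by
    have := hRB x y
    have hx : b x (R y) = - b (R y) x := hskew x (R y)
    rw [hx] at this
    simp only [map_add, map_neg] at this
    rw [this]; abel
  -- Jacobi for R x, R y, z with ω vanishing
  have hj := hjac (R x) (R y) z
  have h1 : ω (R x) (R y) = 0 := hker x (R y)
  have h2' : ω (R y) z = 0 := hker y z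
  have h3 : ω z (R x) = 0 := by rw [hωskew, hker]; ring
  rw [h1, h2', h3] at hj
  simp only [zero_smul, add_zero] at hj
  -- hj : b (b (R x) (R y)) z + b (b (R y) z) (R x) + b (b z (R x)) (R y) = 0
  have key : b (b (R x) (R y)) z = b (R x) (b (R y) z) - b (R y) (b (R x) z) := by
    have e1 : b (b (R y) z) (R x) = - b (R x) (b (R y) z) := hskew _ _
    have e2 : b (b z (R x)) (R y) = b (R y) (b (R x) z) := by
      rw [hskew z (R x)]
      simp only [map_neg, LinearMap.neg_apply]
      rw [hskew (b (R x) z) (R y)]; abel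
    rw [e1, e2] at hj
    have := hj
    abel_nf at this ⊢
    linear_combination (norm := abel_nf) this
  rw [hR]
  simp only [map_add, LinearMap.add_apply]
  rw [key]
  abel
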